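/- Let G be a connected graph, let X be a separator of G with diam_G(X) ≤ d, let V₁, V₂ partition V(G) \ X with no edges between them, and let X' ⊆ X ∪ V₂ with diam_G(X') ≤ d. Let v ∈ V₁ with projection Pr_{v,d}(X) = (X₀,...,X_d). Define s = min over x ∈ X' of min over i of (i + dist_G(X_i,x)), and X'_i = {x ∈ X' : min over j of (j + dist_G(X_j,x)) = s + i}. Then Pr_{v,d}(X') = (X'₀,...,X'_d). -/

import Mathlib

noncomputable def setDist {V : Type*} (G : SimpleGraph V) (S : Set V) (x : V) : ℕ :=
  sInf {m | ∃ u ∈ S, m = G.dist u x}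

noncomputable def eSetDist {V : Type*} (G : SimpleGraph V) (S : Set V) (x : V) : ℕ∞ :=
  sInf {m | ∃ u ∈ S, m = (G.dist u x : ℕ∞)}

/-- The `i`-th class of the projection of `v` on `X`. -/
def projClass {V : Type*} (G : SimpleGraph V) (X : Set V) (v : V) (i : ℕ) : Set V :=
  {x ∈ X | G.dist v x = setDist G X v + i}

/-!
Since `X` separates `v` from `X ∪ V₂`, a shortest path from `v` to any `x ∈ X ∪ V₂` passes
through some `u ∈ X`. Then `u` lies in the class `X_j` with `j = dist v u - dist(X, v) ≤ d`, and
the triangle inequality gives `dist v x ≤ dist(X, v) + j + dist w x` for every `w ∈ X_j`; hence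
`min_j (j + dist(X_j, x)) = dist v x - dist(X, v)`. This shifts all distances from `v` by the
same constant, so it induces the projection of `X'`.
-/

open SimpleGraph

section

variable {V : Type*} {G : SimpleGraph V}

section SetDist

variable {S : Set V} {u x : V}

lemma setDist_le_dist (hu : u ∈ S) : setDist G S x ≤ G.dist u x :=
  Nat.sInf_le ⟨u, hu, rfl⟩

lemma exists_dist_eq_setDist (hS : S.Nonempty) : ∃ u ∈ S, G.dist u x = setDist G S x := by
  obtain ⟨u, hu⟩ := hS
  obtain ⟨w, hw, h⟩ := Nat.sInf_mem (s := {m | ∃ u ∈ S, m = G.dist u x}) ⟨_, u, hu, rfl⟩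
  exact ⟨w, hw, h.symm⟩

lemma eSetDist_le_dist (hu : u ∈ S) : eSetDist G S x ≤ G.dist u x :=
  sInf_le ⟨u, hu, rfl⟩

lemma le_eSetDist_of_forall_le {c : ℕ∞} (h : ∀ u ∈ S, c ≤ G.dist u x) :
    c ≤ eSetDist G S x :=
  le_sInf <| by
    rintro _ ⟨u, hu, rfl⟩
    exact h u hu

end SetDist

theorem SimpleGraph.Reachable.exists_mem_dist_add_dist_eq_of_separates {A X : Set V} {a x : V}
    (hax : G.Reachable a x) (hA : ∀ b ∈ A, ∀ c, G.Adj b c → c ∈ A ∪ X) (ha : a ∈ A)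
    (hx : x ∉ A) : ∃ u ∈ X, G.dist a u + G.dist u x = G.dist a x := by
  classical
  obtain ⟨p, hp⟩ := hax.exists_walk_length_eq_dist
  obtain ⟨e, he, heA, he'A⟩ := p.exists_boundary_dart A ha hx
  have hsupp := p.dart_snd_mem_support_of_mem_darts he
  refine ⟨e.snd, (hA _ heA _ e.adj).resolve_left he'A, le_antisymm ?_ ?_⟩
  · calc G.dist a e.snd + G.dist e.snd x
        ≤ (p.takeUntil _ hsupp).length + (p.dropUntil _ hsupp).length :=
          add_le_add (dist_le _) (dist_le _)
      _ = G.dist a x := by rw [← Walk.length_append, Walk.take_spec, hp]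
  · exact (p.takeUntil _ hsupp).reachable.dist_triangle_left x

section Projection

variable {X : Set V} {v : V} {d : ℕ}

/-- The paper's `min_j (j + dist_G(X_j, x))` over the classes `X_j` of `Pr_{v,d}(X)`. -/
noncomputable def projDist (G : SimpleGraph V) (X : Set V) (v : V) (d : ℕ) (x : V) : ℕ∞ :=
  sInf {e : ℕ∞ | ∃ j ≤ d, e = (j : ℕ∞) + eSetDist G (projClass G X v j) x}

lemma setDist_le_dist_of_dist_add_dist_eq {x : V}
    (hx : ∃ u ∈ X, G.dist v u + G.dist u x = G.dist v x) : setDist G X v ≤ G.dist v x := by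
  obtain ⟨u, hu, hux⟩ := hx
  have := dist_comm (G := G) ▸ setDist_le_dist (G := G) (x := v) hu
  omega

lemma projDist_eq_dist_sub_setDist (hG : G.Connected) (hX : X.Nonempty)
    (hdiam : ∀ a ∈ X, ∀ b ∈ X, G.dist a b ≤ d) {x : V}
    (hx : ∃ u ∈ X, G.dist v u + G.dist u x = G.dist v x) :
    projDist G X v d x = (G.dist v x - setDist G X v : ℕ) := by
  obtain ⟨u, hu, hux⟩ := hx
  set D := setDist G X v
  have hD : D ≤ G.dist v u := dist_comm (G := G) ▸ setDist_le_dist hu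
  obtain ⟨u₀, hu₀, hu₀D⟩ := exists_dist_eq_setDist (G := G) (x := v) hX
  have hj : G.dist v u - D ≤ d := by
    have := hG.dist_triangle (u := v) (v := u₀) (w := u)
    have := hdiam u₀ hu₀ u hu
    rw [dist_comm] at hu₀D
    omega
  apply le_antisymm
  · calc projDist G X v d x
        ≤ ((G.dist v u - D : ℕ) : ℕ∞) + eSetDist G (projClass G X v (G.dist v u - D)) x :=
          sInf_le ⟨_, hj, rfl⟩
      _ ≤ ((G.dist v u - D : ℕ) : ℕ∞) + G.dist u x := by
          gcongr
          exact eSetDist_le_dist ⟨hu, by omega⟩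
      _ = _ := by norm_cast; omega
  · refine le_sInf ?_
    rintro _ ⟨j, -, rfl⟩
    have hclass : ((G.dist v x - D - j : ℕ) : ℕ∞) ≤ eSetDist G (projClass G X v j) x :=
      le_eSetDist_of_forall_le fun w ⟨_, hw⟩ => by
        have := hG.dist_triangle (u := v) (v := w) (w := x)
        norm_cast
        omega
    calc ((G.dist v x - D : ℕ) : ℕ∞)
        ≤ (j : ℕ∞) + ((G.dist v x - D - j : ℕ) : ℕ∞) := by norm_cast; omega
      _ ≤ _ := by gcongr

lemma projClass_eq_of_dist_add_dist_eq (hG : G.Connected) (hX : X.Nonempty)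
    (hdiam : ∀ a ∈ X, ∀ b ∈ X, G.dist a b ≤ d) {X' : Set V} (hX' : X'.Nonempty)
    (hsep : ∀ y ∈ X', ∃ u ∈ X, G.dist v u + G.dist u y = G.dist v y) (i : ℕ) :
    projClass G X' v i =
      {x ∈ X' | projDist G X v d x = sInf {e | ∃ y ∈ X', e = projDist G X v d y} + i} := by
  set D := setDist G X v
  set D' := setDist G X' v
  have hDle : ∀ y ∈ X', D ≤ G.dist v y := fun y hy =>
    setDist_le_dist_of_dist_add_dist_eq (hsep y hy)
  have hD'le : ∀ y ∈ X', D' ≤ G.dist v y := fun y hy =>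
    dist_comm (G := G) ▸ setDist_le_dist hy
  obtain ⟨y₀, hy₀, hy₀D'⟩ := exists_dist_eq_setDist (G := G) (x := v) hX'
  rw [dist_comm] at hy₀D'
  have hDD' := hDle y₀ hy₀
  have hproj : ∀ y ∈ X', projDist G X v d y = (G.dist v y - D : ℕ) := fun y hy =>
    projDist_eq_dist_sub_setDist hG hX hdiam (hsep y hy)
  have hmin : sInf {e | ∃ y ∈ X', e = projDist G X v d y} = ((D' - D : ℕ) : ℕ∞) := by
    apply le_antisymm
    · exact sInf_le ⟨y₀, hy₀, by rw [hproj y₀ hy₀, hy₀D']⟩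
    · refine le_sInf ?_
      rintro _ ⟨y, hy, rfl⟩
      rw [hproj y hy]
      have := hD'le y hy
      norm_cast
      omega
  ext x
  simp only [projClass, Set.mem_ofPred_eq, hmin]
  refine and_congr_right fun hx => ?_
  rw [hproj x hx]
  have := hDle x hx
  have := hD'le x hx
  norm_cast
  omega

end Projection

end

theorem stmt13_general {V : Type*} (G : SimpleGraph V) (hG : G.Connected)
    (X V₁ V₂ : Set V) (d : ℕ)
    (hpart : V₁ ∪ V₂ = Xᶜ) (hdisj : Disjoint V₁ V₂)
    (hnoedge : ∀ u ∈ V₁, ∀ w ∈ V₂, ¬ G.Adj u w)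
    (hXne : X.Nonempty) (hdiamX : ∀ a ∈ X, ∀ b ∈ X, G.dist a b ≤ d)
    (X' : Set V) (hX'sub : X' ⊆ X ∪ V₂) (hX'ne : X'.Nonempty)
    (v : V) (hv : v ∈ V₁) :
    ∀ i ≤ d,
      projClass G X' v i =
      {x ∈ X' |
        sInf {e : ℕ∞ | ∃ j ≤ d, e = (j : ℕ∞) + eSetDist G (projClass G X v j) x} =
        sInf {e : ℕ∞ | ∃ y ∈ X',
          e = sInf {e' : ℕ∞ | ∃ j ≤ d,
                e' = (j : ℕ∞) + eSetDist G (projClass G X v j) y}} + (i : ℕ∞)} := by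
  have hboundary : ∀ b ∈ V₁, ∀ c, G.Adj b c → c ∈ V₁ ∪ X := by
    intro b hb c hbc
    by_cases hcX : c ∈ X
    · exact Or.inr hcX
    · have hc : c ∈ V₁ ∪ V₂ := by rw [hpart]; exact hcX
      exact Or.inl (hc.resolve_right fun hcV₂ => hnoedge b hb c hcV₂ hbc)
  have hX'V₁ : ∀ y ∈ X', y ∉ V₁ := by
    intro y hy hyV₁
    rcases hX'sub hy with hyX | hyV₂
    · have hy' : y ∈ V₁ ∪ V₂ := Or.inl hyV₁
      rw [hpart] at hy'
      exact hy' hyX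
    · exact Set.disjoint_left.mp hdisj hyV₁ hyV₂
  intro i _
  exact projClass_eq_of_dist_add_dist_eq hG hXne hdiamX hX'ne
    (fun y hy => (hG v y).exists_mem_dist_add_dist_eq_of_separates hboundary hv (hX'V₁ y hy)) i

theorem stmt13 {V : Type*} (G : SimpleGraph V) (hG : G.Connected)
    (X V₁ V₂ : Set V) (d : ℕ)
    (hpart : V₁ ∪ V₂ = Xᶜ) (hdisj : Disjoint V₁ V₂)
    (h1 : V₁.Nonempty) (h2 : V₂.Nonempty)
    (hnoedge : ∀ u ∈ V₁, ∀ w ∈ V₂, ¬ G.Adj u w)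
    (hXne : X.Nonempty) (hdiamX : ∀ a ∈ X, ∀ b ∈ X, G.dist a b ≤ d)
    (X' : Set V) (hX'sub : X' ⊆ X ∪ V₂) (hX'ne : X'.Nonempty)
    (hdiamX' : ∀ a ∈ X', ∀ b ∈ X', G.dist a b ≤ d)
    (v : V) (hv : v ∈ V₁) :
    ∀ i ≤ d,
      projClass G X' v i =
      {x ∈ X' |
        sInf {e : ℕ∞ | ∃ j ≤ d, e = (j : ℕ∞) + eSetDist G (projClass G X v j) x} =
        sInf {e : ℕ∞ | ∃ y ∈ X',
          e = sInf {e' : ℕ∞ | ∃ j ≤ d,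
                e' = (j : ℕ∞) + eSetDist G (projClass G X v j) y}} + (i : ℕ∞)} :=
  stmt13_general G hG X V₁ V₂ d hpart hdisj hnoedge hXne hdiamX X' hX'sub hX'ne v hv
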